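/- arXiv:2511.08400 — 6 statements merged into one kernel-verified Lean document; each statement's English description precedes it below -/
import Mathlib

section
/- There do not exist positive integers x, y, u, v such that x² + y² = u² and x² − y² = v² simultaneously. -/
/-!
Fermat's descent. If `x² + y² = u²` and `x² - y² = v²` with `x, y` coprime, then `x` is odd and `y`
even, so `a = (u + v) / 2` and `b = (u - v) / 2` are the legs of a primitive right triangle with
hypotenuse `x` and `2ab = y²`. Writing `a = m² - n²`, `b = 2mn`, the pairwise coprime factors of
`mn(m + n)(m - n) = (y / 2)²` are squares `r², s², t², w²`, so that `r² + s² = t²`,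
`r² - s² = w²` with `0 < r < x`.
-/

def SumDiffSquares (x y : ℤ) : Prop :=
  ∃ u v : ℤ, x ^ 2 + y ^ 2 = u ^ 2 ∧ x ^ 2 - y ^ 2 = v ^ 2

theorem Int.sq_emod_four (t : ℤ) : t % 2 = 0 ∧ t ^ 2 % 4 = 0 ∨ t % 2 = 1 ∧ t ^ 2 % 4 = 1 := by
  rcases Int.even_or_odd' t with ⟨k, rfl | rfl⟩
  · rw [show (2 * k) ^ 2 = 4 * k ^ 2 by ring]
    omega
  · rw [show (2 * k + 1) ^ 2 = 4 * (k ^ 2 + k) + 1 by ring]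
    omega

theorem Int.emod_two_eq_one_or_of_isCoprime {a b : ℤ} (h : IsCoprime a b) :
    a % 2 = 1 ∨ b % 2 = 1 := by
  by_contra! h2
  have h2_unit := h.isUnit_of_dvd' (show (2 : ℤ) ∣ a by omega) (show (2 : ℤ) ∣ b by omega)
  norm_num [Int.isUnit_iff] at h2_unit

theorem Int.exists_pos_sq_of_isCoprime {a b c : ℤ} (ha : 0 < a) (hab : IsCoprime a b)
    (h : a * b = c ^ 2) : ∃ r, 0 < r ∧ a = r ^ 2 := by
  obtain ⟨r, hr | hr⟩ := Int.sq_of_isCoprime hab h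
  · refine ⟨|r|, abs_pos.mpr ?_, by rw [sq_abs, hr]⟩
    rintro rfl
    simp [hr] at ha
  · nlinarith [sq_nonneg r]

theorem Int.isCoprime_add_sub {m n : ℤ} (hmn : IsCoprime m n) (hodd : Odd (m + n)) :
    IsCoprime (m + n) (m - n) := by
  have hm : IsCoprime (m + n) m := by
    simpa only [one_mul, add_comm n] using hmn.symm.add_mul_right_left 1
  have h := ((Int.isCoprime_two_right.mpr hodd).mul_right hm).add_mul_left_right (-1)
  rwa [show 2 * m + (m + n) * -1 = m - n by ring] at h

theorem SumDiffSquares.of_mul {x y k : ℤ} (hk : k ≠ 0) (h : SumDiffSquares (x * k) (y * k)) :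
    SumDiffSquares x y := by
  obtain ⟨u, v, hu, hv⟩ := h
  obtain ⟨u, rfl⟩ : k ∣ u :=
    (Int.pow_dvd_pow_iff two_ne_zero).mp ⟨x ^ 2 + y ^ 2, by rw [← hu]; ring⟩
  obtain ⟨v, rfl⟩ : k ∣ v :=
    (Int.pow_dvd_pow_iff two_ne_zero).mp ⟨x ^ 2 - y ^ 2, by rw [← hv]; ring⟩
  have hk2 : k ^ 2 ≠ 0 := pow_ne_zero 2 hk
  exact ⟨u, v, mul_left_cancel₀ hk2 (by linear_combination hu),
    mul_left_cancel₀ hk2 (by linear_combination hv)⟩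

theorem SumDiffSquares.exists_legs {x y : ℤ} (hy : y ≠ 0) (hxy : IsCoprime x y)
    (h : SumDiffSquares x y) :
    ∃ a b, 0 < a ∧ 0 < b ∧ IsCoprime a b ∧ a ^ 2 + b ^ 2 = x ^ 2 ∧ 2 * a * b = y ^ 2 := by
  obtain ⟨u, v, hu, hv⟩ := h
  wlog hu0 : 0 ≤ u generalizing u
  · exact this (-u) (by rwa [neg_sq]) (by linarith)
  -- Squares are `0` or `1` mod `4`, which forces `x` odd and `y` even.
  have huv_odd : u % 2 = 1 ∧ v % 2 = 1 := by
    have hxy_odd := Int.emod_two_eq_one_or_of_isCoprime hxy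
    rcases Int.sq_emod_four x with hx' | hx' <;> rcases Int.sq_emod_four y with hy' | hy' <;>
      rcases Int.sq_emod_four u with hu' | hu' <;> rcases Int.sq_emod_four v with hv' | hv' <;>
      omega
  obtain ⟨a, b, rfl, rfl⟩ : ∃ a b, u = a + b ∧ v = a - b :=
    ⟨(u + v) / 2, (u - v) / 2, by omega, by omega⟩
  have hpyth : a ^ 2 + b ^ 2 = x ^ 2 := by linarith
  have harea : 2 * a * b = y ^ 2 := by linarith
  have hab : 0 < a * b := by nlinarith [sq_pos_of_ne_zero hy]
  obtain ⟨s, t, hst⟩ := hxy.pow (m := 2) (n := 2)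
  refine ⟨a, b, by nlinarith, by nlinarith, ⟨s * a + 2 * t * b, s * b, ?_⟩, hpyth, harea⟩
  linear_combination hst + s * hpyth + t * harea

theorem exists_sumDiffSquares_of_legs {a b x y : ℤ} (ha : 0 < a) (hb : 0 < b) (hx : 0 < x)
    (hab : IsCoprime a b) (hpyth : a ^ 2 + b ^ 2 = x ^ 2) (harea : 2 * a * b = y ^ 2) :
    ∃ r s, 0 < r ∧ r < x ∧ 0 < s ∧ SumDiffSquares r s := by
  wlog hodd : a % 2 = 1 generalizing a b
  · exact this hb ha hab.symm (by linarith) (by linarith)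
      ((Int.emod_two_eq_one_or_of_isCoprime hab).resolve_left hodd)
  obtain ⟨m, n, rfl, rfl, rfl, hmn, hpar, hm⟩ :=
    PythagoreanTriple.coprime_classification' (by unfold PythagoreanTriple; linarith)
      (Int.isCoprime_iff_gcd_eq_one.mp hab) hodd hx
  replace hmn : IsCoprime m n := Int.isCoprime_iff_gcd_eq_one.mpr hmn
  have hm : 0 < m := hm.lt_of_ne (by rintro rfl; simp at hb)
  have hn : 0 < n := by nlinarith
  have hnm : n < m := by nlinarith
  obtain ⟨k, rfl⟩ : Even y :=
    (Int.even_pow' two_ne_zero).mp ⟨2 * m * n * (m ^ 2 - n ^ 2), by linarith⟩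
  have hk : m * n * ((m + n) * (m - n)) = k ^ 2 := by linarith
  have hcop : IsCoprime (m * n) ((m + n) * (m - n)) := by
    have hm' := (hmn.pow_right (n := 2)).neg_right.add_mul_left_right m
    have hn' := (hmn.symm.pow_right (n := 2)).add_mul_left_right (-n)
    rw [show -n ^ 2 + m * m = (m + n) * (m - n) by ring] at hm'
    rw [show m ^ 2 + n * -n = (m + n) * (m - n) by ring] at hn'
    exact hm'.mul_left hn'
  obtain ⟨p, -, hp⟩ := Int.exists_pos_sq_of_isCoprime (by positivity) hcop (by rw [hk])
  obtain ⟨q, -, hq⟩ :=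
    Int.exists_pos_sq_of_isCoprime (by nlinarith) hcop.symm (by rw [mul_comm, hk])
  obtain ⟨r, hr, rfl⟩ := Int.exists_pos_sq_of_isCoprime hm hmn (by rw [hp])
  obtain ⟨s, hs, rfl⟩ := Int.exists_pos_sq_of_isCoprime hn hmn.symm (by rw [mul_comm, hp])
  have hcop' := Int.isCoprime_add_sub hmn (Int.odd_iff.mpr (by omega))
  obtain ⟨t, -, ht⟩ := Int.exists_pos_sq_of_isCoprime (by positivity) hcop' (by rw [hq])
  obtain ⟨w, -, hw⟩ :=
    Int.exists_pos_sq_of_isCoprime (by linarith) hcop'.symm (by rw [mul_comm, hq])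
  exact ⟨r, s, hr, by nlinarith, hs, t, w, ht, hw⟩

theorem SumDiffSquares.exists_lt {x y : ℤ} (hx : 0 < x) (hy : y ≠ 0) (h : SumDiffSquares x y) :
    ∃ r s, 0 < r ∧ r < x ∧ 0 < s ∧ SumDiffSquares r s := by
  obtain ⟨g, x, y, hg, hxy, rfl, rfl⟩ :=
    Int.exists_gcd_one' (Int.gcd_pos_of_ne_zero_left y hx.ne')
  have hg' : (0 : ℤ) < g := by exact_mod_cast hg
  have hx' : 0 < x := pos_of_mul_pos_left hx hg'.le
  obtain ⟨a, b, ha, hb, hab, hpyth, harea⟩ := (h.of_mul hg'.ne').exists_legs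
    (left_ne_zero_of_mul hy) (Int.isCoprime_iff_gcd_eq_one.mpr hxy)
  obtain ⟨r, s, hr, hrx, hs, hrs⟩ := exists_sumDiffSquares_of_legs ha hb hx' hab hpyth harea
  exact ⟨r, s, hr, hrx.trans_le (le_mul_of_one_le_right hx'.le hg'), hs, hrs⟩

theorem not_sumDiffSquares {x y : ℤ} (hx : 0 < x) (hy : y ≠ 0) : ¬SumDiffSquares x y := by
  lift x to ℕ using hx.le
  induction x using Nat.strong_induction_on generalizing y with
  | _ x ih =>
    intro h
    obtain ⟨r, s, hr, hrx, hs, hrs⟩ := h.exists_lt hx hy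
    lift r to ℕ using hr.le
    exact ih r (by exact_mod_cast hrx) hs.ne' hr hrs

theorem ibn_khawwam_problem1 :
    ¬ ∃ x y u v : ℤ, 0 < x ∧ 0 < y ∧ 0 < u ∧ 0 < v ∧
      x ^ 2 + y ^ 2 = u ^ 2 ∧ x ^ 2 - y ^ 2 = v ^ 2 := by
  rintro ⟨x, y, u, v, hx, hy, -, -, hu, hv⟩
  exact not_sumDiffSquares hx hy.ne' ⟨u, v, hu, hv⟩
end

section
/- There do not exist positive integers x, y, z such that x⁴ − y⁴ = z². -/
/-!
Fermat's infinite descent. After dividing out `gcd x y`, a solution of `x⁴ - y⁴ = z²` with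
`x, y` coprime makes `(y², z, x²)` or `(z, y², x²)` a primitive Pythagorean triple.
If `y` is odd, Euclid's parametrisation `y² = m² - n²`, `x² = m² + n²` gives
`m⁴ - n⁴ = (x y)²` with `m < x`. If `y` is even, `y² = 2 m n` forces `{m, n} = {2 a², b²}`,
so `x² = b⁴ + 4 a⁴`; parametrising this triple once more, `b² = p² - q²` and `a² = p q`
give `p = c²`, `q = d²`, hence `c⁴ - d⁴ = b²` with `c < x`. Either way there is a smaller
solution.
-/

def Fermat42Sub (x y z : ℤ) : Prop :=
  0 < x ∧ 0 < y ∧ 0 < z ∧ x ^ 4 - y ^ 4 = z ^ 2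

theorem Int.exists_pos_sq_of_isCoprime_of_mul_eq_sq {a b c : ℤ} (h : IsCoprime a b)
    (heq : a * b = c ^ 2) (ha : 0 < a) : ∃ r, 0 < r ∧ a = r ^ 2 := by
  obtain ⟨r, hr | hr⟩ := Int.sq_of_isCoprime h heq
  · have hr0 : r ≠ 0 := by rintro rfl; simp at hr; omega
    exact ⟨|r|, abs_pos.mpr hr0, by rw [sq_abs, hr]⟩
  · nlinarith [sq_nonneg r]

namespace Fermat42Sub

variable {x y z : ℤ}

theorem of_mul {g : ℤ} (hg : 0 < g) (h : Fermat42Sub (x * g) (y * g) z) :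
    ∃ z', Fermat42Sub x y z' := by
  obtain ⟨hx, hy, hz, heq⟩ := h
  have hdvd : g ^ 2 ∣ z := by
    rw [← Int.pow_dvd_pow_iff two_ne_zero]
    exact ⟨x ^ 4 - y ^ 4, by rw [← heq]; ring⟩
  obtain ⟨z', rfl⟩ := hdvd
  refine ⟨z', pos_of_mul_pos_left hx hg.le, pos_of_mul_pos_left hy hg.le,
    pos_of_mul_pos_right hz (by positivity), ?_⟩
  apply mul_left_cancel₀ (pow_ne_zero 4 hg.ne')
  linear_combination heq

theorem exists_isCoprime (h : Fermat42Sub x y z) :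
    ∃ x' y' z', Fermat42Sub x' y' z' ∧ IsCoprime x' y' ∧ x' ≤ x := by
  obtain ⟨g, x', y', hg, hxy', rfl, rfl⟩ :=
    Int.exists_gcd_one' (Int.gcd_pos_of_ne_zero_left y h.1.ne')
  obtain ⟨z', h'⟩ := of_mul (by exact_mod_cast hg) h
  refine ⟨x', y', z', h', Int.isCoprime_iff_gcd_eq_one.mpr hxy', ?_⟩
  exact le_mul_of_one_le_right h'.1.le (by exact_mod_cast hg)

theorem isCoprime_of_isCoprime (h : Fermat42Sub x y z) (hxy : IsCoprime x y) :
    IsCoprime y z := by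
  rw [← IsCoprime.pow_right_iff two_pos, ← h.2.2.2,
    show x ^ 4 - y ^ 4 = x ^ 4 - y * y ^ 3 by ring, IsCoprime.sub_mul_left_right_iff]
  exact hxy.symm.pow_right

theorem exists_of_sq_eq_pow_four_add_four_mul_pow_four {a b : ℤ} (ha : 0 < a) (hb : 0 < b)
    (hx : 0 < x) (hb2 : b % 2 = 1) (hab : IsCoprime a b) (h : x ^ 2 = b ^ 4 + 4 * a ^ 4) :
    ∃ c d, Fermat42Sub c d b ∧ c < x := by
  have htriple : PythagoreanTriple (b ^ 2) (2 * a ^ 2) x := by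
    unfold PythagoreanTriple; linear_combination -h
  have hcop : IsCoprime (b ^ 2) (2 * a ^ 2) :=
    ((Int.isCoprime_two_right.mpr (Int.odd_iff.mpr hb2)).mul_right hab.symm.pow_right).pow_left
  obtain ⟨p, q, hbpq, hapq, hxpq, hpq, -, hp0⟩ := htriple.coprime_classification'
    (Int.isCoprime_iff_gcd_eq_one.mp hcop) (Int.odd_iff.mp (Int.odd_iff.mpr hb2).pow) hx
  have hpq_eq : p * q = a ^ 2 := by linarith
  have hq : 0 < q := by nlinarith
  have hp : 0 < p := by nlinarith
  have hpq' := Int.isCoprime_iff_gcd_eq_one.mpr hpq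
  obtain ⟨c, hc, rfl⟩ := Int.exists_pos_sq_of_isCoprime_of_mul_eq_sq hpq' hpq_eq hp
  obtain ⟨d, hd, rfl⟩ :=
    Int.exists_pos_sq_of_isCoprime_of_mul_eq_sq hpq'.symm ((mul_comm _ _).trans hpq_eq) hq
  exact ⟨c, d, ⟨hc, hd, hb, by linear_combination -hbpq⟩, by nlinarith⟩

theorem exists_lt_of_odd (h : Fermat42Sub x y z) (hxy : IsCoprime x y) (hy : Odd y) :
    ∃ x' y' z', Fermat42Sub x' y' z' ∧ x' < x := by
  have hyz := h.isCoprime_of_isCoprime hxy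
  obtain ⟨hx, hy0, hz, heq⟩ := h
  have htriple : PythagoreanTriple (y ^ 2) z (x ^ 2) := by
    unfold PythagoreanTriple; linear_combination -heq
  obtain ⟨m, n, hymn, hzmn, hxmn, -, -, hm0⟩ := htriple.coprime_classification'
    (Int.isCoprime_iff_gcd_eq_one.mp hyz.pow_left) (Int.odd_iff.mp hy.pow) (by positivity)
  have hm : 0 < m := hm0.lt_of_ne (by rintro rfl; simp at hzmn; omega)
  have hn : 0 < |n| := abs_pos.mpr (by rintro rfl; simp at hzmn; omega)
  refine ⟨m, |n|, x * y, ⟨hm, hn, mul_pos hx hy0, ?_⟩, by nlinarith [sq_abs n]⟩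
  calc m ^ 4 - |n| ^ 4 = (m ^ 2 + n ^ 2) * (m ^ 2 - n ^ 2) := by
        rw [(show Even 4 by decide).pow_abs]; ring
    _ = (x * y) ^ 2 := by rw [← hxmn, ← hymn]; ring

theorem exists_sq_eq_pow_four_add_four_mul_pow_four {m n k : ℤ} (hm : 0 < m) (hn : 0 < n)
    (hmn : IsCoprime m n) (hn2 : n % 2 = 1) (h : m * n = 2 * k ^ 2) :
    ∃ a b, 0 < a ∧ 0 < b ∧ b % 2 = 1 ∧ IsCoprime a b ∧
      m ^ 2 + n ^ 2 = b ^ 4 + 4 * a ^ 4 := by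
  obtain ⟨m', rfl⟩ : 2 ∣ m := (Int.prime_two.dvd_mul.mp ⟨_, h⟩).resolve_right (by omega)
  have hm'n : m' * n = k ^ 2 := by linarith
  have hcop : IsCoprime m' n := hmn.of_mul_left_right
  obtain ⟨a, ha, rfl⟩ := Int.exists_pos_sq_of_isCoprime_of_mul_eq_sq hcop hm'n (by omega)
  obtain ⟨b, hb, rfl⟩ :=
    Int.exists_pos_sq_of_isCoprime_of_mul_eq_sq hcop.symm ((mul_comm _ _).trans hm'n) hn
  refine ⟨a, b, ha, hb, ?_, (IsCoprime.pow_iff two_pos two_pos).mp hcop, by ring⟩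
  exact Int.odd_iff.mp ((Int.odd_pow' two_ne_zero).mp (Int.odd_iff.mpr hn2))

theorem exists_lt_of_even (h : Fermat42Sub x y z) (hxy : IsCoprime x y) (hy : Even y) :
    ∃ x' y' z', Fermat42Sub x' y' z' ∧ x' < x := by
  have hyz := h.isCoprime_of_isCoprime hxy
  have hz2 : z % 2 = 1 := Int.odd_iff.mp <| Int.isCoprime_two_left.mp <|
    hyz.of_isCoprime_of_dvd_left (even_iff_two_dvd.mp hy)
  obtain ⟨hx, hy0, -, heq⟩ := h
  have htriple : PythagoreanTriple z (y ^ 2) (x ^ 2) := by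
    unfold PythagoreanTriple; linear_combination -heq
  obtain ⟨m, n, -, hymn, hxmn, hmn, hpar, hm0⟩ := htriple.coprime_classification'
    (Int.isCoprime_iff_gcd_eq_one.mp hyz.symm.pow_right) hz2 (by positivity)
  obtain ⟨k, rfl⟩ := hy
  have hmnk : m * n = 2 * k ^ 2 := by linarith
  have hm : 0 < m := hm0.lt_of_ne (by rintro rfl; nlinarith)
  have hn : 0 < n := by nlinarith
  have hmn' := Int.isCoprime_iff_gcd_eq_one.mpr hmn
  obtain ⟨a, b, ha, hb, hb2, hab, hx2⟩ :
      ∃ a b, 0 < a ∧ 0 < b ∧ b % 2 = 1 ∧ IsCoprime a b ∧ x ^ 2 = b ^ 4 + 4 * a ^ 4 := by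
    rw [hxmn]
    rcases hpar with ⟨-, hn2⟩ | ⟨hm2, -⟩
    · exact exists_sq_eq_pow_four_add_four_mul_pow_four hm hn hmn' hn2 hmnk
    · rw [add_comm]
      exact exists_sq_eq_pow_four_add_four_mul_pow_four hn hm hmn'.symm hm2
        ((mul_comm _ _).trans hmnk)
  obtain ⟨c, d, hcd, hc⟩ := exists_of_sq_eq_pow_four_add_four_mul_pow_four ha hb hx hb2 hab hx2
  exact ⟨c, d, b, hcd, hc⟩

theorem exists_lt (h : Fermat42Sub x y z) : ∃ x' y' z', Fermat42Sub x' y' z' ∧ x' < x := by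
  obtain ⟨x₁, y₁, z₁, h₁, hcop, hle⟩ := h.exists_isCoprime
  obtain ⟨x', y', z', h', hlt⟩ :=
    (Int.even_or_odd y₁).elim (h₁.exists_lt_of_even hcop) (h₁.exists_lt_of_odd hcop)
  exact ⟨x', y', z', h', hlt.trans_le hle⟩

end Fermat42Sub

theorem not_fermat42Sub (x y z : ℤ) : ¬ Fermat42Sub x y z := by
  induction hn : x.toNat using Nat.strong_induction_on generalizing x y z with
  | _ n ih =>
    intro h
    obtain ⟨x', y', z', h', hlt⟩ := h.exists_lt
    have hx' := h'.1
    exact ih x'.toNat (by omega) x' y' z' rfl h'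

theorem no_x4_sub_y4_eq_z2 :
    ¬ ∃ x y z : ℤ, 0 < x ∧ 0 < y ∧ 0 < z ∧ x ^ 4 - y ^ 4 = z ^ 2 := by
  rintro ⟨x, y, z, h⟩
  exact not_fermat42Sub x y z h
end

section
/- There do not exist positive rational numbers x and y such that x²·(x² + y²) = y⁴. -/
/-! Writing `u = y² / x²`, the equation reads `u² - u - 1 = 0`, so `(2u - 1)² = 5`:
a rational solution would make `5` a rational square. -/

theorem sq_sub_eq_five_mul_sq_of_mul_add_eq {R : Type*} [CommRing R] {x y : R}
    (h : x ^ 2 * (x ^ 2 + y ^ 2) = y ^ 4) : (2 * y ^ 2 - x ^ 2) ^ 2 = 5 * (x ^ 2) ^ 2 := by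
  linear_combination (-4) * h

theorem isSquare_five_of_mul_add_eq {K : Type*} [Field K] {x y : K} (hx : x ≠ 0)
    (h : x ^ 2 * (x ^ 2 + y ^ 2) = y ^ 4) : IsSquare (5 : K) :=
  ⟨(2 * y ^ 2 - x ^ 2) / x ^ 2, by
    rw [← sq, div_pow, sq_sub_eq_five_mul_sq_of_mul_add_eq h,
      mul_div_cancel_right₀ _ (by positivity)]⟩

theorem Rat.not_isSquare_five : ¬ IsSquare (5 : ℚ) := by
  rw [Rat.isSquare_ofNat_iff]
  norm_num

theorem ibn_khawwam_problem9 :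
    ¬ ∃ x y : ℚ, 0 < x ∧ 0 < y ∧ x ^ 2 * (x ^ 2 + y ^ 2) = y ^ 4 := by
  rintro ⟨x, y, hx, -, h⟩
  exact Rat.not_isSquare_five (isSquare_five_of_mul_add_eq hx.ne' h)
end

section
/- There do not exist positive integers x, y, a such that x⁶ + y⁶ = a²·x³·y³. -/
/-!
With `p = x³`, `q = y³` the equation reads `p² + q² = a² p q`. It is homogeneous, so `p` and `q`
may be divided by their gcd; once they are coprime, each divides the square of the other, hence
`p = q = 1` and `a² = 2`, which is impossible.
-/

lemma Nat.eq_one_of_sq_add_sq_eq_mul_of_coprime {p q c : ℕ} (hpq : p.Coprime q)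
    (h : p ^ 2 + q ^ 2 = c * p * q) : p = 1 := by
  have hdvd : p ∣ p ^ 2 + q ^ 2 := h ▸ ⟨c * q, by ring⟩
  exact (hpq.pow_right 2).eq_one_of_dvd ((Nat.dvd_add_right (dvd_pow_self p two_ne_zero)).mp hdvd)

lemma Nat.eq_two_of_sq_add_sq_eq_mul {p q c : ℕ} (hp : 0 < p) (h : p ^ 2 + q ^ 2 = c * p * q) :
    c = 2 := by
  obtain ⟨g, p, q, hg, hpq, rfl, rfl⟩ := Nat.exists_coprime' (Nat.gcd_pos_of_pos_left q hp)
  have hreduced : p ^ 2 + q ^ 2 = c * p * q := by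
    refine Nat.eq_of_mul_eq_mul_left (pow_pos hg 2) ?_
    calc g ^ 2 * (p ^ 2 + q ^ 2) = (p * g) ^ 2 + (q * g) ^ 2 := by ring
      _ = c * (p * g) * (q * g) := h
      _ = g ^ 2 * (c * p * q) := by ring
  have hp1 := eq_one_of_sq_add_sq_eq_mul_of_coprime hpq hreduced
  have hq1 := eq_one_of_sq_add_sq_eq_mul_of_coprime (c := c) hpq.symm
    (by rw [add_comm, hreduced]; ring)
  subst hp1 hq1
  simpa using hreduced.symm

theorem ibn_khawwam_problem13 :
    ¬ ∃ x y a : ℕ, 0 < x ∧ 0 < y ∧ 0 < a ∧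
      x ^ 6 + y ^ 6 = a ^ 2 * x ^ 3 * y ^ 3 := by
  rintro ⟨x, y, a, hx, -, -, h⟩
  have ha : a ^ 2 = 2 :=
    Nat.eq_two_of_sq_add_sq_eq_mul (q := y ^ 3) (pow_pos hx 3)
      (by rw [← pow_mul, ← pow_mul]; exact h)
  exact Nat.prime_two.prime.not_isSquare ⟨a, by rw [← ha, sq]⟩
end

section
/- The only natural number solutions (x, y) of x⁶ − x³ = y² are (0, 0) and (1, 0). -/
/-! We have `x⁶ − x³ = (x³)² − x³`, and `n² − n` is a perfect square only for `n ≤ 1`: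
for `n = m + 1 ≥ 2` it equals `m² + m`, strictly between the consecutive squares `m²` and `(m + 1)²`. -/

theorem Nat.le_one_of_sq_sub_self_eq_sq {n y : ℕ} (h : n ^ 2 - n = y ^ 2) : n ≤ 1 := by
  by_contra! hn
  obtain ⟨m, rfl⟩ : ∃ m, n = m + 1 := ⟨n - 1, by omega⟩
  have hy : y ^ 2 = m ^ 2 + m := by
    rw [← h, show (m + 1) ^ 2 = m ^ 2 + m + (m + 1) by ring, Nat.add_sub_cancel]
  have hy_lt : y < m + 1 := lt_of_pow_lt_pow_left₀ 2 (Nat.zero_le _) (by rw [hy]; nlinarith)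
  have hm_lt : m < y := lt_of_pow_lt_pow_left₀ 2 (Nat.zero_le _) (by rw [hy]; omega)
  omega

theorem ibn_khawwam_problem23 (x y : ℕ) :
    x ^ 6 - x ^ 3 = y ^ 2 ↔ (x = 0 ∧ y = 0) ∨ (x = 1 ∧ y = 0) := by
  constructor
  · intro h
    have hx : x ≤ 1 := by
      have hcube : x ^ 3 ≤ 1 := Nat.le_one_of_sq_sub_self_eq_sq (y := y) (by rw [← pow_mul]; exact h)
      exact (pow_le_one_iff_of_nonneg x.zero_le (by norm_num)).mp hcube
    have hy : y = 0 := by interval_cases x <;> simpa using h.symm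
    omega
  · rintro (⟨rfl, rfl⟩ | ⟨rfl, rfl⟩) <;> norm_num
end

section
/- There do not exist nonzero rational numbers x and y with x + y = 10 and x/y + y/x = x. -/
/-!
Clearing denominators in `x / y + y / x = x` and substituting `y = 10 - x` shows that `x` is a root
of the monic cubic `X³ - 8X² - 20X + 100`. By the integral root theorem a rational root of a monic
integer polynomial is an integer, but this cubic has no root even modulo `8`.
-/

open Polynomial

theorem exists_int_eq_of_monic_cubic_root (a b c : ℤ) {x : ℚ}
    (hx : x ^ 3 + a * x ^ 2 + b * x + c = 0) : ∃ n : ℤ, x = n := by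
  have hmonic : (X ^ 3 + C a * X ^ 2 + C b * X + C c : ℤ[X]).Monic := by monicity!
  obtain ⟨n, rfl, -⟩ := exists_integer_of_is_root_of_monic hmonic (r := x) (by simpa using hx)
  exact ⟨n, rfl⟩

theorem cubic_ne_zero_zmod_eight (n : ZMod 8) : n ^ 3 - 8 * n ^ 2 - 20 * n + 100 ≠ 0 := by
  revert n
  decide

theorem int_cubic_ne_zero (n : ℤ) : n ^ 3 - 8 * n ^ 2 - 20 * n + 100 ≠ 0 := fun h =>
  cubic_ne_zero_zmod_eight n (by exact_mod_cast congrArg (Int.cast : ℤ → ZMod 8) h)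

theorem cubic_eq_zero_of_div_add_div_eq {x y : ℚ} (hx : x ≠ 0) (hy : y ≠ 0)
    (hsum : x + y = 10) (heq : x / y + y / x = x) : x ^ 3 - 8 * x ^ 2 - 20 * x + 100 = 0 := by
  obtain rfl : y = 10 - x := by linarith
  field_simp at heq
  linear_combination heq

theorem ibn_khawwam_problem32 :
    ¬ ∃ x y : ℚ, x ≠ 0 ∧ y ≠ 0 ∧ x + y = 10 ∧ x / y + y / x = x := by
  rintro ⟨x, y, hx, hy, hsum, heq⟩
  have hcubic := cubic_eq_zero_of_div_add_div_eq hx hy hsum heq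
  obtain ⟨n, rfl⟩ :=
    exists_int_eq_of_monic_cubic_root (-8) (-20) 100 (x := x) (by push_cast; linarith)
  exact int_cubic_ne_zero n (by exact_mod_cast hcubic)
end
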